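/- arXiv:1410.8264 — 8 statements merged into one kernel-verified Lean document; each statement's English description precedes it below -/
import Mathlib

section
/- For any real numbers x_0, ..., x_n and any real λ, writing x̄_k = max{x_0, ..., x_k}, we have λ·1{x̄_n ≥ λ} ≤ min(x_0, λ) + Σ_{k=1}^n 1{x̄_{k-1} < λ}·(x_k − x_{k-1}) − x_n·1{x̄_n < λ}. -/
/-!
Let `τ` be the first index with `x τ ≥ λ`. Up to `τ` the sum telescopes, so the right-hand side
equals `x k` while `k < τ`, and from `τ` on it stays frozen at `x τ ≥ λ`; in both regimes it
dominates the value of `x` capped at `λ` once the running maximum has reached `λ`.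
-/

open Finset

theorem capped_le_min_add_sum {α : Type*} [AddCommGroup α] [LinearOrder α]
    [IsOrderedAddMonoid α] (x : ℕ → α) (lam : α) (m : ℕ) :
    (if lam ≤ partialSups x m then lam else x m) ≤
      min (x 0) lam + ∑ k ∈ Icc 1 m, if partialSups x (k - 1) < lam then x k - x (k - 1) else 0 := by
  induction m with
  | zero =>
    by_cases h : lam ≤ x 0
    · simp [h]
    · simp [h, (not_le.mp h).le]
  | succ m ih =>
    rw [sum_Icc_succ_top (by omega), Nat.add_sub_cancel, partialSups_add_one, ← add_assoc]
    by_cases h : lam ≤ partialSups x m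
    · have h' : lam ≤ partialSups x m ⊔ x (m + 1) := le_sup_of_le_left h
      rw [if_pos h] at ih
      rw [if_pos h', if_neg (not_lt.mpr h), add_zero]
      exact ih
    · rw [if_neg h] at ih
      rw [if_pos (not_le.mp h)]
      have capped_le : (if lam ≤ partialSups x m ⊔ x (m + 1) then lam else x (m + 1)) ≤
          x (m + 1) := by
        split_ifs with h'
        · exact (le_sup_iff.mp h').resolve_left h
        · exact le_rfl
      calc _ ≤ x (m + 1) := capped_le
        _ = x m + (x (m + 1) - x m) := by abel
        _ ≤ _ := add_le_add_left ih _

theorem stmt0 (n : ℕ) (x : ℕ → ℝ) (lam : ℝ) (xb : ℕ → ℝ)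
    (hxb : ∀ k, xb k = (Finset.range (k + 1)).sup' Finset.nonempty_range_add_one x) :
    lam * (if lam ≤ xb n then (1 : ℝ) else 0) ≤
      min (x 0) lam
        + ∑ k ∈ Finset.Icc 1 n, (if xb (k - 1) < lam then (1 : ℝ) else 0) * (x k - x (k - 1))
        - x n * (if xb n < lam then (1 : ℝ) else 0) := by
  obtain rfl : xb = partialSups x :=
    funext fun k ↦ (hxb k).trans (partialSups_eq_sup'_range x k).symm
  have hcap : lam * (if lam ≤ partialSups x n then (1 : ℝ) else 0)
      + x n * (if partialSups x n < lam then (1 : ℝ) else 0) =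
      if lam ≤ partialSups x n then lam else x n := by
    rcases le_or_gt lam (partialSups x n) with h | h
    · simp [h, not_lt.mpr h]
    · simp [h, not_le.mpr h]
  simp only [boole_mul]
  linarith [capped_le_min_add_sum x lam n]
end

section
/- For any real numbers x_0, ..., x_n and any real λ, writing x̄_k = max{x_0, ..., x_k}, we have λ·1{x̄_n ≥ λ} ≤ −(x_0 − λ)·1{x_0 ≥ λ} − Σ_{k=1}^n 1{x̄_{k-1} ≥ λ}·(x_k − x_{k-1}) + x_n·1{x̄_n ≥ λ}. -/
/-!
Summation by parts turns the right-hand side minus the left-hand side into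
`∑ k ∈ [1, n], (x k - λ) * (1{x̄_k ≥ λ} - 1{x̄_{k-1} ≥ λ})`. Every term is nonnegative: the
indicator of the running maximum can only switch on at a step `k` where `x k` itself reaches `λ`.
-/

open Finset

theorem sum_Icc_one_by_parts {R : Type*} [CommRing R] (f g : ℕ → R) (n : ℕ) :
    ∑ k ∈ Icc 1 n, g k * (f k - f (k - 1)) =
      g n * f n - g 0 * f 0 - ∑ k ∈ Icc 1 n, f (k - 1) * (g k - g (k - 1)) := by
  induction n with
  | zero => simp
  | succ n ih =>
    rw [sum_Icc_succ_top (Nat.le_add_left 1 n), sum_Icc_succ_top (Nat.le_add_left 1 n), ih,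
      Nat.add_sub_cancel]
    ring

theorem sub_mul_ite_le_sup_sub_ite_nonneg {α : Type*} [Ring α] [LinearOrder α]
    [IsOrderedRing α] (a c lam : α) :
    0 ≤ (c - lam) * ((if lam ≤ a ⊔ c then 1 else 0) - if lam ≤ a then 1 else 0) := by
  by_cases ha : lam ≤ a
  · simp [ha, le_sup_of_le_left ha]
  · by_cases hc : lam ≤ c
    · simp [ha, hc, le_sup_of_le_right hc]
    · simp [ha, hc]

theorem stmt1 (n : ℕ) (x : ℕ → ℝ) (lam : ℝ) (xb : ℕ → ℝ)
    (hxb : ∀ k, xb k = (Finset.range (k + 1)).sup' Finset.nonempty_range_add_one x) :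
    lam * (if lam ≤ xb n then (1 : ℝ) else 0) ≤
      -((x 0 - lam) * (if lam ≤ x 0 then (1 : ℝ) else 0))
        - ∑ k ∈ Finset.Icc 1 n, (if lam ≤ xb (k - 1) then (1 : ℝ) else 0) * (x k - x (k - 1))
        + x n * (if lam ≤ xb n then (1 : ℝ) else 0) := by
  obtain rfl : xb = partialSups x :=
    funext fun k => (hxb k).trans (partialSups_eq_sup'_range x k).symm
  set I : ℕ → ℝ := fun k => if lam ≤ partialSups x k then 1 else 0
  have hI0 : (if lam ≤ x 0 then (1 : ℝ) else 0) = I 0 := by simp [I]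
  have hgap := sum_Icc_one_by_parts I (fun k => x k - lam) n
  simp only [sub_sub_sub_cancel_right] at hgap
  have hgap_nonneg : 0 ≤ ∑ k ∈ Icc 1 n, (x k - lam) * (I k - I (k - 1)) := by
    refine sum_nonneg fun k hk => ?_
    obtain ⟨j, rfl⟩ := Nat.exists_eq_add_of_le' (mem_Icc.mp hk).1
    simpa [I, partialSups_succ] using
      sub_mul_ite_le_sup_sub_ite_nonneg (partialSups x j) (x (j + 1)) lam
  rw [hI0]
  linarith
end

section
/- In the pathwise inequality λ·1{x̄_n ≥ λ} ≤ min(x_0, λ) + Σ_{k=1}^n 1{x̄_{k-1} < λ}·(x_k − x_{k-1}) − x_n·1{x̄_n < λ}, equality holds whenever x̄_n < λ or x_0 ≥ λ; and if j ∈ {1,...,n} is the first index with x_j ≥ λ (so x̄_{j-1} < λ ≤ x_j), the difference between the right-hand and left-hand sides equals x_j − λ. -/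
/-! The indicator `1{x̄_{k-1} < λ}` equals `1{k ≤ τ}`, where `τ` is the first index with
`x_τ ≥ λ` (`τ = 0` if `x_0 ≥ λ`, and `τ = n` if the level is never reached), so the sum
is the stopped telescoping sum `x_τ - x_0`; each claim is then a one-line computation. -/

open Finset

theorem sum_Icc_one_boole_le_mul_sub {R : Type*} [Ring R] (x : ℕ → R) {j n : ℕ}
    (hjn : j ≤ n) :
    ∑ k ∈ Icc 1 n, (if k ≤ j then (1 : R) else 0) * (x k - x (k - 1)) = x j - x 0 := by
  have hfilter : (Icc 1 n).filter (· ≤ j) = Icc 1 j := by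
    ext k; simp only [mem_filter, mem_Icc]; omega
  simp only [boole_mul]
  rw [← sum_filter, hfilter, ← Ico_add_one_right_eq_Icc, sum_Ico_eq_sum_range]
  simpa [add_comm 1] using sum_range_sub x j

section RunningMax

variable {α : Type*} [LinearOrder α]

def runningMax (x : ℕ → α) (k : ℕ) : α := (range (k + 1)).sup' nonempty_range_add_one x

theorem le_runningMax (x : ℕ → α) {i k : ℕ} (hik : i ≤ k) : x i ≤ runningMax x k :=
  le_sup' x (mem_range_succ_iff.2 hik)

theorem runningMax_mono (x : ℕ → α) : Monotone (runningMax x) := fun _ _ hab =>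
  sup'_mono x (range_subset_range.2 (Nat.succ_le_succ hab)) nonempty_range_add_one

theorem runningMax_pred_lt_iff_le {x : ℕ → α} {lam : α} {j k : ℕ}
    (hj : runningMax x (j - 1) < lam) (hxj : lam ≤ x j) (hk : 1 ≤ k) :
    runningMax x (k - 1) < lam ↔ k ≤ j := by
  refine ⟨fun h => ?_, fun hkj => (runningMax_mono x (by omega)).trans_lt hj⟩
  by_contra! hjk
  exact (hxj.trans (le_runningMax x (by omega : j ≤ k - 1))).not_gt h

end RunningMax

theorem sum_boole_runningMax_lt_mul_sub (x : ℕ → ℝ) (lam : ℝ) {j n : ℕ} (hjn : j ≤ n)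
    (hstop : ∀ k ∈ Icc 1 n, runningMax x (k - 1) < lam ↔ k ≤ j) :
    ∑ k ∈ Icc 1 n, (if runningMax x (k - 1) < lam then (1 : ℝ) else 0) * (x k - x (k - 1)) =
      x j - x 0 := by
  rw [← sum_Icc_one_boole_le_mul_sub x hjn]
  exact sum_congr rfl fun k hk => by simp only [hstop k hk]

theorem stmt2 (n : ℕ) (x : ℕ → ℝ) (lam : ℝ) (xb : ℕ → ℝ)
    (hxb : ∀ k, xb k = (Finset.range (k + 1)).sup' Finset.nonempty_range_add_one x) :
    ((xb n < lam ∨ lam ≤ x 0) →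
      lam * (if lam ≤ xb n then (1 : ℝ) else 0) =
        min (x 0) lam
          + ∑ k ∈ Finset.Icc 1 n, (if xb (k - 1) < lam then (1 : ℝ) else 0) * (x k - x (k - 1))
          - x n * (if xb n < lam then (1 : ℝ) else 0)) ∧
    (∀ j, 1 ≤ j → j ≤ n → xb (j - 1) < lam → lam ≤ x j →
      (min (x 0) lam
          + ∑ k ∈ Finset.Icc 1 n, (if xb (k - 1) < lam then (1 : ℝ) else 0) * (x k - x (k - 1))
          - x n * (if xb n < lam then (1 : ℝ) else 0))
        - lam * (if lam ≤ xb n then (1 : ℝ) else 0) = x j - lam) := by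
  obtain rfl : xb = runningMax x := funext hxb
  have hx0 : x 0 ≤ runningMax x n := le_runningMax x n.zero_le
  refine ⟨?_, fun j _ hjn hj hxj => ?_⟩
  · rintro (hbelow | hstart)
    · have hsum := sum_boole_runningMax_lt_mul_sub x lam (le_refl n) fun k hk =>
        have hk' := mem_Icc.1 hk
        iff_of_true ((runningMax_mono x (by omega : k - 1 ≤ n)).trans_lt hbelow) hk'.2
      rw [hsum, if_neg hbelow.not_ge, if_pos hbelow, min_eq_left (hx0.trans_lt hbelow).le]
      ring
    · have hsum := sum_boole_runningMax_lt_mul_sub x lam n.zero_le fun k hk =>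
        iff_of_false (hstart.trans (le_runningMax x (k - 1).zero_le)).not_gt
          (by have := mem_Icc.1 hk; omega)
      rw [hsum, if_pos (hstart.trans hx0), if_neg (hstart.trans hx0).not_gt, min_eq_right hstart]
      ring
  · have hreach : lam ≤ runningMax x n := hxj.trans (le_runningMax x hjn)
    have hsum := sum_boole_runningMax_lt_mul_sub x lam hjn fun k hk =>
      runningMax_pred_lt_iff_le hj hxj (mem_Icc.1 hk).1
    rw [hsum, if_pos hreach, if_neg hreach.not_gt,
      min_eq_left ((le_runningMax x (j - 1).zero_le).trans_lt hj).le]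
    ring
end

section
/- In the pathwise inequality λ·1{x̄_n ≥ λ} ≤ −(x_0 − λ)·1{x_0 ≥ λ} − Σ_{k=1}^n 1{x̄_{k-1} ≥ λ}·(x_k − x_{k-1}) + x_n·1{x̄_n ≥ λ}, equality holds whenever x̄_n < λ or x_0 ≥ λ; and if j ∈ {1,...,n} is the first index with x_j ≥ λ, the difference between the right-hand and left-hand sides equals x_j − λ. -/
/-!
The integrand `1{x̄_{k-1} ≥ λ}` is `0` up to the first index `j` with `x_j ≥ λ` and `1` after it
(take `j = n` if there is none), so the sum telescopes to `x_n - x_j`. In each of the three cases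
the remaining indicators are then constant, and the identity is a matter of arithmetic.
-/

open Finset

theorem sum_Icc_ite_mul_sub_eq_sub (x : ℕ → ℝ) (p : ℕ → Prop) [DecidablePred p] {j n : ℕ}
    (hjn : j ≤ n) (hp : ∀ i < n, (p i ↔ j ≤ i)) :
    ∑ k ∈ Icc 1 n, (if p (k - 1) then (1 : ℝ) else 0) * (x k - x (k - 1)) = x n - x j := by
  calc ∑ k ∈ Icc 1 n, (if p (k - 1) then (1 : ℝ) else 0) * (x k - x (k - 1))
      = ∑ i ∈ Ico 0 n, (if p i then (1 : ℝ) else 0) * (x (i + 1) - x i) := by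
        have shift :=
          sum_Ico_add' (fun k => (if p (k - 1) then (1 : ℝ) else 0) * (x k - x (k - 1))) 0 n 1
        simp only [zero_add, Ico_add_one_right_eq_Icc, Nat.add_sub_cancel] at shift
        exact shift.symm
    _ = ∑ i ∈ Ico 0 n, if j ≤ i then x (i + 1) - x i else 0 := by
        refine sum_congr rfl fun i hi => ?_
        rw [if_congr (hp i (mem_Ico.mp hi).2) rfl rfl, ite_mul, one_mul, zero_mul]
    _ = x n - x j := by
        rw [← sum_filter, Ico_filter_le_of_left_le (Nat.zero_le j), sum_Ico_sub x hjn]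

theorem le_sup'_range_add_one {α : Type*} [SemilatticeSup α] (f : ℕ → α) {k m : ℕ} (h : k ≤ m) :
    f k ≤ (range (m + 1)).sup' nonempty_range_add_one f :=
  le_sup' f (mem_range.mpr (Nat.lt_succ_of_le h))

theorem monotone_sup'_range_add_one {α : Type*} [SemilatticeSup α] (f : ℕ → α) :
    Monotone fun m => (range (m + 1)).sup' nonempty_range_add_one f :=
  fun _ _ h => sup'_mono f (range_subset_range.mpr (Nat.succ_le_succ h)) _

theorem stmt3 (n : ℕ) (x : ℕ → ℝ) (lam : ℝ) (xb : ℕ → ℝ)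
    (hxb : ∀ k, xb k = (Finset.range (k + 1)).sup' Finset.nonempty_range_add_one x) :
    ((xb n < lam ∨ lam ≤ x 0) →
      lam * (if lam ≤ xb n then (1 : ℝ) else 0) =
        -((x 0 - lam) * (if lam ≤ x 0 then (1 : ℝ) else 0))
          - ∑ k ∈ Finset.Icc 1 n, (if lam ≤ xb (k - 1) then (1 : ℝ) else 0) * (x k - x (k - 1))
          + x n * (if lam ≤ xb n then (1 : ℝ) else 0)) ∧
    (∀ j, 1 ≤ j → j ≤ n → xb (j - 1) < lam → lam ≤ x j →
      (-((x 0 - lam) * (if lam ≤ x 0 then (1 : ℝ) else 0))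
          - ∑ k ∈ Finset.Icc 1 n, (if lam ≤ xb (k - 1) then (1 : ℝ) else 0) * (x k - x (k - 1))
          + x n * (if lam ≤ xb n then (1 : ℝ) else 0))
        - lam * (if lam ≤ xb n then (1 : ℝ) else 0) = x j - lam) := by
  have hle : ∀ {k m}, k ≤ m → x k ≤ xb m := fun h => hxb _ ▸ le_sup'_range_add_one x h
  have hmono : Monotone xb := funext hxb ▸ monotone_sup'_range_add_one x
  refine ⟨?_, fun j _ hjn hjlt hjx => ?_⟩
  · rintro (hlt | h0)
    · have hsum := sum_Icc_ite_mul_sub_eq_sub x (lam ≤ xb ·) le_rfl fun i hi =>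
        iff_of_false (hmono hi.le |>.trans_lt hlt).not_ge hi.not_ge
      rw [hsum, if_neg hlt.not_ge, if_neg ((hle n.zero_le).trans_lt hlt).not_ge]
      ring
    · have hsum := sum_Icc_ite_mul_sub_eq_sub x (lam ≤ xb ·) n.zero_le fun i _ =>
        iff_of_true (h0.trans (hle i.zero_le)) i.zero_le
      rw [hsum, if_pos (h0.trans (hle n.zero_le)), if_pos h0]
      ring
  · have hsum := sum_Icc_ite_mul_sub_eq_sub x (lam ≤ xb ·) hjn fun i _ =>
      ⟨fun h => not_lt.mp fun hij => (hmono (Nat.le_sub_one_of_lt hij)).trans_lt hjlt |>.not_ge h,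
        fun hji => hjx.trans (hle hji)⟩
    rw [hsum, if_pos (hjx.trans (hle hjn)), if_neg ((hle (j - 1).zero_le).trans_lt hjlt).not_ge]
    ring
end

section
/- If X = (X_k)_{k=0,...,n} is a supermartingale with respect to a filtration (𝓕_k) on a probability space, then for every λ ∈ ℝ, λ·P(X̄_n ≥ λ) ≤ E[min(X_0, λ)] − ∫_{{X̄_n < λ}} X_n dP, where X̄_n = max{X_0, ..., X_n}. -/
open MeasureTheory Finset

/-!
Let `τ` be the first time in `[0, n]` at which `X` enters `[λ, ∞)`, with `τ = n` if there is none.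
Pointwise, `λ · 1{X̄ₙ ≥ λ} + Xₙ · 1{X̄ₙ < λ} ≤ min(X₀, λ) + (X_τ - X₀)`: where `X₀ ≥ λ` we have
`τ = 0`; elsewhere on `{X̄ₙ ≥ λ}` we have `X_τ ≥ λ`; and on `{X̄ₙ < λ}` we have `τ = n`.
Integrating, optional stopping for the bounded stopping times `0 ≤ τ` gives `E[X_τ] ≤ E[X₀]`.
-/

namespace MeasureTheory

section HittingTime

variable {Ω β : Type*} {u : ℕ → Ω → β} {s : Set β} {n m : ℕ} {ω : Ω}

theorem stoppedValue_hittingBtwn_of_forall_notMem (h : ∀ j ∈ Set.Icc n m, u j ω ∉ s) :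
    stoppedValue u (fun ω ↦ (hittingBtwn u s n m ω : ℕ)) ω = u m ω := by
  have hm : hittingBtwn u s n m ω = m :=
    hittingBtwn_eq_end_iff.2 fun ⟨j, hj, hjs⟩ ↦ absurd hjs (h j hj)
  rw [stoppedValue, hm]; rfl

theorem stoppedValue_hittingBtwn_of_mem (hnm : n ≤ m) (h : u n ω ∈ s) :
    stoppedValue u (fun ω ↦ (hittingBtwn u s n m ω : ℕ)) ω = u n ω := by
  have hn : hittingBtwn u s n m ω = n :=
    le_antisymm (hittingBtwn_le_of_mem le_rfl hnm h) (le_hittingBtwn hnm ω)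
  rw [stoppedValue, hn]; rfl

end HittingTime

theorem Supermartingale.expected_stoppedValue_anti {Ω E : Type*} {m0 : MeasurableSpace Ω}
    {μ : Measure Ω} {ℱ : Filtration ℕ m0} [SigmaFiniteFiltration μ ℱ] [NormedAddCommGroup E]
    [NormedSpace ℝ E] [CompleteSpace E] [PartialOrder E] [IsOrderedAddMonoid E]
    [IsOrderedModule ℝ E] [ClosedIciTopology E] {f : ℕ → Ω → E}
    (hf : Supermartingale f ℱ μ) {τ π : Ω → WithTop ℕ} (hτ : IsStoppingTime ℱ τ)
    (hπ : IsStoppingTime ℱ π) (hle : τ ≤ π) {N : ℕ} (hbdd : ∀ ω, π ω ≤ N) :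
    ∫ ω, stoppedValue f π ω ∂μ ≤ ∫ ω, stoppedValue f τ ω ∂μ := by
  have h := hf.neg.expected_stoppedValue_mono hτ hπ hle hbdd
  rwa [show stoppedValue (-f) τ = -stoppedValue f τ from rfl,
    show stoppedValue (-f) π = -stoppedValue f π from rfl, integral_neg', integral_neg',
    neg_le_neg_iff] at h

section Maximal

variable {Ω : Type*} {m0 : MeasurableSpace Ω} {μ : Measure Ω} {ℱ : Filtration ℕ m0}
  {X : ℕ → Ω → ℝ}

open Classical in
theorem piecewise_le_min_add_stoppedValue_hittingBtwn_sub (n : ℕ) (lam : ℝ) (ω : Ω) :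
    {ω | ∃ j ∈ Set.Icc 0 n, X j ω ∈ Set.Ici lam}.piecewise (fun _ ↦ lam) (X n) ω ≤
      min (X 0 ω) lam +
        (stoppedValue X (fun ω ↦ (hittingBtwn X (Set.Ici lam) 0 n ω : ℕ)) ω - X 0 ω) := by
  by_cases hA : ω ∈ {ω | ∃ j ∈ Set.Icc 0 n, X j ω ∈ Set.Ici lam}
  · rw [Set.piecewise_eq_of_mem _ _ _ hA]
    by_cases h0 : lam ≤ X 0 ω
    · rw [stoppedValue_hittingBtwn_of_mem (s := Set.Ici lam) n.zero_le h0, min_eq_right h0]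
      linarith
    · rw [min_eq_left (not_le.1 h0).le, add_sub_cancel]
      exact stoppedValue_hittingBtwn_mem hA
  · rw [Set.piecewise_eq_of_notMem _ _ _ hA, stoppedValue_hittingBtwn_of_forall_notMem
      fun j hj hjA ↦ hA ⟨j, hj, hjA⟩]
    have h0 : X 0 ω < lam := not_le.1 fun h ↦ hA ⟨0, ⟨le_rfl, n.zero_le⟩, h⟩
    rw [min_eq_left h0.le]
    linarith

open Classical in
theorem Supermartingale.mul_measureReal_add_setIntegral_compl_le [IsFiniteMeasure μ]
    (hX : Supermartingale X ℱ μ) (n : ℕ) (lam : ℝ) :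
    lam * μ.real {ω | ∃ j ∈ Set.Icc 0 n, X j ω ∈ Set.Ici lam} +
        ∫ ω in {ω | ∃ j ∈ Set.Icc 0 n, X j ω ∈ Set.Ici lam}ᶜ, X n ω ∂μ ≤
      ∫ ω, min (X 0 ω) lam ∂μ := by
  set A := {ω | ∃ j ∈ Set.Icc 0 n, X j ω ∈ Set.Ici lam}
  set τ : Ω → WithTop ℕ := fun ω ↦ (hittingBtwn X (Set.Ici lam) 0 n ω : ℕ)
  have hmeas : ∀ j, Measurable (X j) := fun j ↦
    (hX.stronglyMeasurable j).measurable.le (ℱ.le j)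
  have hA : MeasurableSet A := by measurability
  have hτ : IsStoppingTime ℱ τ :=
    Adapted.isStoppingTime_hittingBtwn hX.stronglyAdapted.adapted measurableSet_Ici
  have hτ_le : ∀ ω, τ ω ≤ n := fun ω ↦ WithTop.coe_le_coe.2 (hittingBtwn_le ω)
  have hτ_int : Integrable (stoppedValue X τ) μ := integrable_stoppedValue ℕ hτ hX.integrable hτ_le
  have hgain_int : Integrable (fun ω ↦ stoppedValue X τ ω - X 0 ω) μ :=
    hτ_int.sub (hX.integrable 0)
  have hmin_int : Integrable (fun ω ↦ min (X 0 ω) lam) μ :=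
    (hX.integrable 0).inf (integrable_const lam)
  have hτ_zero : ∫ ω, stoppedValue X τ ω ∂μ ≤ ∫ ω, X 0 ω ∂μ :=
    hX.expected_stoppedValue_anti (isStoppingTime_const ℱ 0) hτ
      (fun ω ↦ WithTop.coe_le_coe.2 (Nat.zero_le _)) hτ_le
  calc lam * μ.real A + ∫ ω in Aᶜ, X n ω ∂μ = ∫ ω, A.piecewise (fun _ ↦ lam) (X n) ω ∂μ := by
        rw [integral_piecewise hA (integrable_const lam).integrableOn
          (hX.integrable n).integrableOn, setIntegral_const, smul_eq_mul, mul_comm]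
    _ ≤ ∫ ω, (min (X 0 ω) lam + (stoppedValue X τ ω - X 0 ω)) ∂μ :=
        integral_mono (Integrable.piecewise hA (integrable_const lam).integrableOn
          (hX.integrable n).integrableOn) (hmin_int.add hgain_int)
          (piecewise_le_min_add_stoppedValue_hittingBtwn_sub n lam)
    _ = ∫ ω, min (X 0 ω) lam ∂μ + (∫ ω, stoppedValue X τ ω ∂μ - ∫ ω, X 0 ω ∂μ) := by
        rw [integral_add hmin_int hgain_int, integral_sub hτ_int (hX.integrable 0)]
    _ ≤ ∫ ω, min (X 0 ω) lam ∂μ := by linarith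

end Maximal

end MeasureTheory

theorem stmt4 {Ω : Type*} {m0 : MeasurableSpace Ω} {μ : Measure Ω} [IsProbabilityMeasure μ]
    (ℱ : Filtration ℕ m0) (X : ℕ → Ω → ℝ) (n : ℕ)
    (hX : Supermartingale X ℱ μ) (lam : ℝ) :
    lam * (μ {ω | lam ≤ (Finset.range (n + 1)).sup' Finset.nonempty_range_add_one
        (fun k => X k ω)}).toReal ≤
      (∫ ω, min (X 0 ω) lam ∂μ)
        - ∫ ω in {ω | (Finset.range (n + 1)).sup' Finset.nonempty_range_add_one
            (fun k => X k ω) < lam}, X n ω ∂μ := by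
  have hevent : {ω | lam ≤ (range (n + 1)).sup' nonempty_range_add_one fun k ↦ X k ω} =
      {ω | ∃ j ∈ Set.Icc 0 n, X j ω ∈ Set.Ici lam} := by
    ext ω
    simp [le_sup'_iff]
  have hcompl : {ω | (range (n + 1)).sup' nonempty_range_add_one (fun k ↦ X k ω) < lam} =
      {ω | ∃ j ∈ Set.Icc 0 n, X j ω ∈ Set.Ici lam}ᶜ := by
    simp only [← hevent, Set.compl_ofPred, not_le]
  rw [hevent, hcompl, ← measureReal_def]
  linarith [hX.mul_measureReal_add_setIntegral_compl_le n lam]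
end

section
/- For nonnegative real numbers x_0, ..., x_n and p > 1 with q = p/(p−1), the pathwise Doob L^p inequality holds: x̄_n^p ≤ q^p x_n^p − q x_0^p − q p Σ_{k=1}^n x̄_{k-1}^{p-1}·(x_k − x_{k-1}), where x̄_k = max{x_0, ..., x_k}. -/
/-!
Let `M = partialSups x` be the running maximum. Summing by parts,
`∑ M_{k-1}^{p-1} (x_k - x_{k-1}) = x_n M_n^{p-1} - x_0^p - ∑ x_k (M_k^{p-1} - M_{k-1}^{p-1})`,
and `M` only moves at times where `x_k = M_k`, so by convexity of `t ↦ t ^ p` each term of the last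
sum is at least `(1 - 1/p) (M_k^p - M_{k-1}^p)`. Young's inequality for `(q x_n) · M_n^{p-1}` then
absorbs the boundary term.
-/

open Finset

/-- Young's inequality for the exponent pair `p`, `p / (p - 1)`, with the denominators cleared;
equivalently the tangent-line bound `a ^ p + p * a ^ (p - 1) * (b - a) ≤ b ^ p`. -/
lemma mul_mul_rpow_sub_one_le {p a b : ℝ} (hp : 1 < p) (ha : 0 ≤ a) (hb : 0 ≤ b) :
    p * (b * a ^ (p - 1)) ≤ b ^ p + (p - 1) * a ^ p := by
  have hpq := Real.HolderConjugate.conjExponent hp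
  have hpow : (a ^ (p - 1)) ^ p.conjExponent = a ^ p := by
    rw [← Real.rpow_mul ha, hpq.sub_one_mul_conj]
  have hY := Real.young_inequality_of_nonneg hb (Real.rpow_nonneg ha (p - 1)) hpq
  rw [hpow] at hY
  calc p * (b * a ^ (p - 1)) ≤ p * (b ^ p / p + a ^ p / p.conjExponent) := by gcongr
    _ = b ^ p + (p - 1) * a ^ p := by
      rw [mul_add, mul_div_cancel₀ _ hpq.ne_zero, ← mul_div_assoc, mul_div_right_comm,
        hpq.div_conj_eq_sub_one]

lemma mul_rpow_sub_one_self {p y : ℝ} (hp : p ≠ 0) (hy : 0 ≤ y) : y * y ^ (p - 1) = y ^ p := by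
  rw [← Real.rpow_one_add' hy (by rwa [add_sub_cancel]), add_sub_cancel]

lemma sub_one_mul_max_rpow_sub_le {p a y : ℝ} (hp : 1 < p) (ha : 0 ≤ a) (hy : 0 ≤ y) :
    (p - 1) * (max a y ^ p - a ^ p) ≤ p * (y * (max a y ^ (p - 1) - a ^ (p - 1))) := by
  rcases le_total y a with hya | hay
  · simp [max_eq_left hya]
  · rw [max_eq_right hay, mul_sub y, mul_rpow_sub_one_self (zero_lt_one.trans hp).ne' hy]
    linarith [mul_mul_rpow_sub_one_le hp ha hy]

lemma mul_sum_partialSups_rpow_mul_sub_le {p : ℝ} (hp : 1 < p) {x : ℕ → ℝ} (hx : ∀ k, 0 ≤ x k)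
    (m : ℕ) :
    p * ∑ k ∈ Icc 1 m, partialSups x (k - 1) ^ (p - 1) * (x k - x (k - 1))
      ≤ p * (x m * partialSups x m ^ (p - 1)) - x 0 ^ p - (p - 1) * partialSups x m ^ p := by
  induction m with
  | zero =>
    simp only [Icc_eq_empty_of_lt zero_lt_one, sum_empty, partialSups_zero,
      mul_rpow_sub_one_self (zero_lt_one.trans hp).ne' (hx 0)]
    linarith
  | succ m ih =>
    have hM : 0 ≤ partialSups x m := (hx 0).trans (le_partialSups_of_le x m.zero_le)
    have hstep := sub_one_mul_max_rpow_sub_le hp hM (hx (m + 1))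
    rw [sum_Icc_succ_top (by omega), Nat.add_sub_cancel, ← Order.succ_eq_add_one,
      partialSups_succ, Order.succ_eq_add_one]
    linarith

theorem stmt6 (n : ℕ) (x : ℕ → ℝ) (hx : ∀ k, 0 ≤ x k) (p : ℝ) (hp : 1 < p)
    (q : ℝ) (hq : q = p / (p - 1)) (xb : ℕ → ℝ)
    (hxb : ∀ k, xb k = (Finset.range (k + 1)).sup' Finset.nonempty_range_add_one x) :
    xb n ^ p ≤ q ^ p * x n ^ p - q * x 0 ^ p
      - q * p * ∑ k ∈ Finset.Icc 1 n, xb (k - 1) ^ (p - 1) * (x k - x (k - 1)) := by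
  obtain rfl : xb = partialSups x :=
    funext fun k => (hxb k).trans (partialSups_eq_sup'_range x k).symm
  have hq0 : 0 ≤ q := by rw [hq]; exact div_nonneg (by linarith) (by linarith)
  have hqp : q * (p - 1) = p := by rw [hq]; exact div_mul_cancel₀ p (by linarith)
  have hsum := mul_le_mul_of_nonneg_left (mul_sum_partialSups_rpow_mul_sub_le hp hx n) hq0
  have hyoung := mul_mul_rpow_sub_one_le hp ((hx 0).trans (le_partialSups_of_le x n.zero_le))
    (mul_nonneg hq0 (hx n))
  rw [Real.mul_rpow hq0 (hx n)] at hyoung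
  linear_combination hsum + hyoung - partialSups x n ^ p * hqp
end

section
/- For positive reals x_0, ..., x_n with x_0 > 0, the pathwise L log L inequality holds: x̄_n ≤ (e/(e−1))·[x_0 + x_n·log(x_n/x_0) − Σ_{k=1}^n log(x̄_{k-1}/x_0)·(x_k − x_{k-1})], where x̄_k = max{x_0, ..., x_k} (with the convention x_n log(x_n/x_0) = 0 if x_n = 0). -/
open Finset Real

/-! With `h k = log (x̄ k / x 0)`, every increment of the running maximum is paid for by the
increment of `h`: `x̄ k - x̄ (k - 1) ≤ x k * (h k - h (k - 1))`, because `x k = x̄ k` whenever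
`x̄` grows and `1 - 1 / t ≤ log t`. Summation by parts then gives
`∑ h (k - 1) * (x k - x (k - 1)) ≤ h n * x n - x̄ n + x 0`, and the leftover term
`x n * log (x n / x̄ n)` is at least `-x̄ n / e` since `y * log (a / y) ≤ a / e`. -/

lemma sub_le_mul_log_div {a b : ℝ} (ha : 0 < a) (hb : 0 < b) : b - a ≤ b * log (b / a) := by
  have h := mul_le_mul_of_nonneg_left (one_sub_inv_le_log_of_pos (div_pos hb ha)) hb.le
  rwa [inv_div, mul_sub, mul_one, mul_div_cancel₀ _ hb.ne'] at h

lemma max_sub_le_mul_log_max_div {m y : ℝ} (hm : 0 < m) :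
    max m y - m ≤ y * log (max m y / m) := by
  rcases le_or_gt y m with hle | hlt
  · simp [max_eq_left hle, hm.ne']
  · rw [max_eq_right hlt.le]
    exact sub_le_mul_log_div hm (hm.trans hlt)

lemma log_le_div_exp_one {t : ℝ} (ht : 0 ≤ t) : log t ≤ t / exp 1 := by
  rcases ht.eq_or_lt with rfl | ht
  · simp
  · have h := log_le_sub_one_of_pos (div_pos ht (exp_pos 1))
    rw [log_div ht.ne' (exp_pos 1).ne', log_exp] at h
    linarith

lemma mul_log_div_le_div_exp_one {y a : ℝ} (hy : 0 ≤ y) (ha : 0 ≤ a) :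
    y * log (a / y) ≤ a / exp 1 := by
  rcases hy.eq_or_lt with rfl | hy
  · simp only [div_zero, log_zero, mul_zero]; positivity
  · calc y * log (a / y) ≤ y * (a / y / exp 1) :=
          mul_le_mul_of_nonneg_left (log_le_div_exp_one (div_nonneg ha hy.le)) hy.le
      _ = a / exp 1 := by field_simp

lemma sum_log_partialSups_div_mul_sub_le (x : ℕ → ℝ) (h0 : 0 < x 0) (n : ℕ) :
    ∑ k ∈ Icc 1 n, log (partialSups x (k - 1) / x 0) * (x k - x (k - 1)) ≤
      log (partialSups x n / x 0) * x n - partialSups x n + x 0 := by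
  have hpos (k : ℕ) : 0 < partialSups x k := h0.trans_le (le_partialSups_of_le x k.zero_le)
  induction n with
  | zero => simp [h0.ne']
  | succ n ih =>
    rw [sum_Icc_succ_top (by omega), Nat.add_sub_cancel]
    have hstep : partialSups x (n + 1) - partialSups x n ≤
        x (n + 1) * log (partialSups x (n + 1) / partialSups x n) := by
      rw [partialSups_add_one]
      exact max_sub_le_mul_log_max_div (hpos n)
    have hlog : log (partialSups x (n + 1) / partialSups x n) =
        log (partialSups x (n + 1) / x 0) - log (partialSups x n / x 0) := by
      rw [log_div (hpos _).ne' (hpos _).ne', log_div (hpos _).ne' h0.ne',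
        log_div (hpos _).ne' h0.ne']
      ring
    rw [hlog] at hstep
    linarith

theorem stmt9 (n : ℕ) (x : ℕ → ℝ) (h0 : 0 < x 0) (hx : ∀ k, 0 ≤ x k) (xb : ℕ → ℝ)
    (hxb : ∀ k, xb k = (Finset.range (k + 1)).sup' Finset.nonempty_range_add_one x) :
    xb n ≤ Real.exp 1 / (Real.exp 1 - 1) *
      (x 0 + x n * Real.log (x n / x 0)
        - ∑ k ∈ Finset.Icc 1 n, Real.log (xb (k - 1) / x 0) * (x k - x (k - 1))) := by
  obtain rfl : xb = partialSups x :=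
    funext fun k => (hxb k).trans (partialSups_eq_sup'_range x k).symm
  set M := partialSups x n
  have hM : 0 < M := h0.trans_le (le_partialSups_of_le x n.zero_le)
  have hsum := sum_log_partialSups_div_mul_sub_le x h0 n
  have hlast : x n * log (x n / x 0) - log (M / x 0) * x n = -(x n * log (M / x n)) := by
    rcases (hx n).eq_or_lt with hzero | hpos
    · simp [← hzero]
    · rw [log_div hpos.ne' h0.ne', log_div hM.ne' h0.ne', log_div hM.ne' hpos.ne']
      ring
  have hent := mul_log_div_le_div_exp_one (hx n) hM.le
  have he : 1 < exp 1 := one_lt_exp_iff.mpr one_pos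
  have hbound : M - M / exp 1 ≤ x 0 + x n * log (x n / x 0)
      - ∑ k ∈ Icc 1 n, log (partialSups x (k - 1) / x 0) * (x k - x (k - 1)) := by
    linarith
  calc M = exp 1 / (exp 1 - 1) * (M - M / exp 1) := by field_simp [(sub_pos.mpr he).ne']
    _ ≤ _ := mul_le_mul_of_nonneg_left hbound (div_pos (exp_pos 1) (sub_pos.mpr he)).le
end

section
/- For positive reals x_0, ..., x_n with x_0 > 0: x̄_n ≤ (e/(e−1))·[x_0(1 − log x_0) + x_n log x_n − Σ_{k=1}^n (log x̄_{k-1})·(x_k − x_{k-1})], where x̄_k = max{x_0, ..., x_k} and x_n log x_n is interpreted as 0 if x_n = 0. -/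
/-!
With `M k` the running maximum, the potential `M k - x k * log (M k)` drops at step `k + 1` by at
least `log (M k) * (x (k + 1) - x k)`: this is an equality when the maximum does not move, and
when it jumps to `x (k + 1)` it is the inequality `a - a log a ≤ b - a log b` (i.e. `log t ≤ t - 1`).
Summing, `M n - x n log (M n)` is bounded by `x 0 (1 - log x 0)` minus the sum, and the same
inequality with `b = M n / e` gives `x n log x n - x n log (M n) ≥ -M n / e`. Adding the two yields
`(1 - 1/e) M n ≤` the bracket.
-/

open Finset Real

theorem sub_mul_log_le_sub_mul_log {a b : ℝ} (ha : 0 ≤ a) (hb : 0 < b) :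
    a - a * log a ≤ b - a * log b := by
  rcases ha.eq_or_lt with rfl | ha
  · simpa using hb.le
  · have h := mul_le_mul_of_nonneg_left (log_le_sub_one_of_pos (div_pos hb ha)) ha.le
    rw [log_div hb.ne' ha.ne', mul_sub, mul_sub, mul_div_cancel₀ _ ha.ne'] at h
    linarith

theorem neg_div_exp_le_mul_log_sub_mul_log {a b : ℝ} (ha : 0 ≤ a) (hb : 0 < b) :
    -(b / exp 1) ≤ a * log a - a * log b := by
  have h := sub_mul_log_le_sub_mul_log ha (div_pos hb (exp_pos 1))
  rw [log_div hb.ne' (exp_pos 1).ne', log_exp] at h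
  linarith

theorem max_sub_mul_log_max_le {y b : ℝ} (hb : 0 < b) :
    max y b - y * log (max y b) ≤ b - y * log b := by
  rcases le_total y b with h | h
  · rw [max_eq_right h]
  · rw [max_eq_left h]
    exact sub_mul_log_le_sub_mul_log (hb.le.trans h) hb

section RunningMax

variable {x M : ℕ → ℝ}

theorem pos_of_running_max (hM0 : 0 < M 0) (hM : ∀ k, M (k + 1) = max (x (k + 1)) (M k)) (k : ℕ) :
    0 < M k := by
  induction k with
  | zero => exact hM0
  | succ k ih => exact (hM k).symm ▸ lt_max_of_lt_right ih

theorem running_max_sub_mul_log_le (hM0 : 0 < M 0) (hM : ∀ k, M (k + 1) = max (x (k + 1)) (M k))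
    (n : ℕ) :
    M n - x n * log (M n) ≤
      M 0 - x 0 * log (M 0) - ∑ k ∈ Icc 1 n, log (M (k - 1)) * (x k - x (k - 1)) := by
  induction n with
  | zero => simp
  | succ n ih =>
    have hstep := max_sub_mul_log_max_le (y := x (n + 1)) (pos_of_running_max hM0 hM n)
    rw [sum_Icc_succ_top (Nat.le_add_left 1 n), Nat.add_sub_cancel, hM n]
    linarith

end RunningMax

theorem stmt10 (n : ℕ) (x : ℕ → ℝ) (h0 : 0 < x 0) (hx : ∀ k, 0 ≤ x k) (xb : ℕ → ℝ)
    (hxb : ∀ k, xb k = (Finset.range (k + 1)).sup' Finset.nonempty_range_add_one x) :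
    xb n ≤ Real.exp 1 / (Real.exp 1 - 1) *
      (x 0 * (1 - Real.log (x 0)) + x n * Real.log (x n)
        - ∑ k ∈ Finset.Icc 1 n, Real.log (xb (k - 1)) * (x k - x (k - 1))) := by
  have hxb0 : xb 0 = x 0 := by simp [hxb]
  have hxb_succ : ∀ k, xb (k + 1) = max (x (k + 1)) (xb k) := by
    intro k
    simp [hxb, range_add_one]
  have hpos : 0 < xb 0 := hxb0 ▸ h0
  have hpotential := hxb0 ▸ running_max_sub_mul_log_le hpos hxb_succ n
  have hlast := neg_div_exp_le_mul_log_sub_mul_log (hx n) (pos_of_running_max hpos hxb_succ n)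
  have he : 1 < exp 1 := one_lt_exp_iff.mpr one_pos
  rw [div_mul_eq_mul_div, le_div_iff₀ (by linarith)]
  calc xb n * (exp 1 - 1) = exp 1 * (xb n - xb n / exp 1) := by field_simp
    _ ≤ _ := mul_le_mul_of_nonneg_left (by linarith) (exp_pos 1).le
end
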